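/- Let f_1, …, f_n : ℝ^d → ℝ be differentiable, convex, bounded below and L_i-smooth for symmetric positive semidefinite matrices L_i, and f = (1/n) Σ_i f_i. Let C_1, …, C_n be mutually independent sketches, C_i associated with a proper sampling S_i with matrix P̃_i, and define g(x) = (1/n) Σ_{i=1}^n L_i^{1/2} C_i L_i^{†1/2} ∇f_i(x). Then E[g(x)] = ∇f(x) for every x, and for every x, y ∈ ℝ^d: E[‖g(x) − ∇f(y)‖²] = ‖∇f(x) − ∇f(y)‖² + (1/n²) Σ_{i=1}^n ‖L_i^{†1/2} ∇f_i(x)‖²_{P̃_i ∘ L_i}. -/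

import Mathlib

open scoped BigOperators RealInnerProductSpace
open Matrix

noncomputable section

/-- A proper sampling on `{1,…,d}`: a finitely supported probability distribution over
subsets of `Fin d` whose marginal probabilities are all positive. -/
structure Sampling (d : ℕ) where
  prob : Finset (Fin d) → ℝ
  nonneg : ∀ S, 0 ≤ prob S
  total : ∑ S : Finset (Fin d), prob S = 1
  margPos : ∀ j : Fin d, 0 < ∑ S : Finset (Fin d), if j ∈ S then prob S else 0

namespace Sampling

variable {d : ℕ} (μ : Sampling d)

/-- Marginal probability `p_j = Prob(j ∈ S)`. -/
def marg (j : Fin d) : ℝ := ∑ S : Finset (Fin d), if j ∈ S then μ.prob S else 0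

/-- Probability matrix `P`, with entries `p_{jl} = Prob({j,l} ⊆ S)`. -/
def probMatrix : Matrix (Fin d) (Fin d) ℝ :=
  Matrix.of fun j l => ∑ S : Finset (Fin d), if j ∈ S ∧ l ∈ S then μ.prob S else 0

/-- The matrix `P̄` with entries `p_{jl}/(p_j p_l)`. -/
def Pbar : Matrix (Fin d) (Fin d) ℝ :=
  Matrix.of fun j l => μ.probMatrix j l / (μ.marg j * μ.marg l)

/-- The matrix `P̃ = P̄ − E` where `E` is the all-ones matrix. -/
def Ptilde : Matrix (Fin d) (Fin d) ℝ := μ.Pbar - Matrix.of fun _ _ => (1 : ℝ)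

/-- The unbiased diagonal sketch `C` associated with a realization `S` of the sampling. -/
def sketch (S : Finset (Fin d)) : Matrix (Fin d) (Fin d) ℝ :=
  Matrix.diagonal fun j => if j ∈ S then (μ.marg j)⁻¹ else 0

end Sampling

/-- Largest eigenvalue of a symmetric matrix, via the Rayleigh quotient. -/
def lambdaMax {d : ℕ} (M : Matrix (Fin d) (Fin d) ℝ) : ℝ :=
  sSup {r : ℝ | ∃ v : Fin d → ℝ, v ⬝ᵥ v = 1 ∧ r = v ⬝ᵥ M.mulVec v}

/-- Smallest eigenvalue of a symmetric matrix, via the Rayleigh quotient. -/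
def lambdaMin {d : ℕ} (M : Matrix (Fin d) (Fin d) ℝ) : ℝ :=
  sInf {r : ℝ | ∃ v : Fin d → ℝ, v ⬝ᵥ v = 1 ∧ r = v ⬝ᵥ M.mulVec v}

/-- `Mdag` is the Moore–Penrose pseudoinverse of `M`. -/
def IsMoorePenrose {m n : Type*} [Fintype m] [Fintype n]
    (M : Matrix m n ℝ) (Mdag : Matrix n m ℝ) : Prop :=
  M * Mdag * M = M ∧ Mdag * M * Mdag = Mdag ∧
    (M * Mdag)ᵀ = M * Mdag ∧ (Mdag * M)ᵀ = Mdag * M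

/-- Vectors in `ℝ^d` with the Euclidean inner product. -/
abbrev Vec (d : ℕ) := EuclideanSpace ℝ (Fin d)

/-- Action of a matrix on a Euclidean vector. -/
def mact {d e : ℕ} (M : Matrix (Fin e) (Fin d) ℝ) (x : Vec d) : Vec e :=
  Matrix.toEuclideanLin M x

/-- Quadratic form `xᵀ M x`, i.e. the squared `M`-seminorm `‖x‖²_M`. -/
def quad {d : ℕ} (M : Matrix (Fin d) (Fin d) ℝ) (x : Vec d) : ℝ := ⟪x, mact M x⟫

/-- `f` is `M`-smooth: `f x ≤ f y + ⟨∇f(y), x−y⟩ + ½ (x−y)ᵀ M (x−y)` for all `x, y`. -/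
def MSmooth {d : ℕ} (f : Vec d → ℝ) (M : Matrix (Fin d) (Fin d) ℝ) : Prop :=
  ∀ x y : Vec d, f x ≤ f y + ⟪gradient f y, x - y⟫ + (1 / 2) * quad M (x - y)

/-- Random iterates driven by i.i.d. draws: `traj x0 step k ω` is the `k`-th iterate along
the sample path `ω` of `k` draws. -/
def traj {V Ω : Type*} (x0 : V) (step : V → Ω → V) : ∀ k : ℕ, (Fin k → Ω) → V
  | 0, _ => x0
  | k + 1, ω => step (traj x0 step k fun i => ω i.castSucc) (ω (Fin.last k))

/-- Expectation `E[φ(x^k)]` of a functional of the `k`-th iterate, over `k` i.i.d. draws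
with one-step distribution `P`. -/
def trajExp {V Ω : Type*} [Fintype Ω] (P : Ω → ℝ) (x0 : V) (step : V → Ω → V)
    (φ : V → ℝ) (k : ℕ) : ℝ :=
  ∑ ω : Fin k → Ω, (∏ i, P (ω i)) * φ (traj x0 step k ω)

/-! The square roots `L^{1/2}` and `L^{†1/2}` commute, so their product is a positive
semidefinite square root of the orthogonal projector `L L†`, which is its own square root; hence
`L^{1/2} L^{†1/2} = L L†`. The gradient of a function that is bounded below and `L`-smooth is
orthogonal to `ker L`, since along a direction in `ker L` smoothness bounds the function above by
an affine one; so `L L† ∇f_i(x) = ∇f_i(x)`, and `E[C] = I` gives unbiasedness. For the second moment, the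
centred summands are independent with mean zero, so only their variances survive, and
`E[C M C] = P̄ ∘ M` identifies the variance of the `i`-th summand with
`‖L_i^{†1/2} ∇f_i(x)‖²_{P̃_i ∘ L_i}`. -/

namespace IsMoorePenrose

variable {m : Type*} [Fintype m] {L Ldag : Matrix m m ℝ}

theorem mul_mul_self {n : Type*} [Fintype n] {A : Matrix m n ℝ} {B : Matrix n m ℝ}
    (h : IsMoorePenrose A B) : A * B * (A * B) = A * B := by
  rw [← Matrix.mul_assoc, h.1]

theorem mul_mul_pinv_of_transpose_eq (hL : Lᵀ = L) (h : IsMoorePenrose L Ldag) :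
    L * (L * Ldag) = L :=
  calc L * (L * Ldag) = Lᵀ * (L * Ldag)ᵀ := by rw [hL, h.2.2.1]
    _ = L := by rw [← transpose_mul, h.1, hL]

theorem commute_of_transpose_eq (hL : Lᵀ = L) (h : IsMoorePenrose L Ldag) :
    Commute L Ldag := by
  have hQL : Ldag * L * L = L :=
    calc Ldag * L * L = (Ldag * L)ᵀ * Lᵀ := by rw [hL, h.2.2.2]
      _ = L := by rw [← transpose_mul, ← mul_assoc, h.1, hL]
  calc L * Ldag = Ldag * L * L * Ldag := by rw [hQL]
    _ = Ldag * (L * (L * Ldag)) := by simp only [mul_assoc]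
    _ = Ldag * L := by rw [mul_mul_pinv_of_transpose_eq hL h]

open scoped MatrixOrder in
theorem mul_eq_mul_of_mul_self_eq [DecidableEq m] {H K : Matrix m m ℝ}
    (h : IsMoorePenrose L Ldag) (hH : H.PosSemidef) (hHL : H * H = L) (hK : K.PosSemidef)
    (hKL : K * K = Ldag) :
    H * K = L * Ldag := by
  have hL : Lᵀ = L := by
    rw [← hHL, transpose_mul, ← conjTranspose_eq_transpose_of_trivial, hH.1]
  have hHK : Commute H K := by
    have hH' : H = CFC.sqrt L := by rw [← hHL, CFC.sqrt_mul_self H hH.nonneg]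
    have hK' : K = CFC.sqrt Ldag := by rw [← hKL, CFC.sqrt_mul_self K hK.nonneg]
    rw [hH', hK']
    exact (((h.commute_of_transpose_eq hL).cfcₙ_nnreal _).symm.cfcₙ_nnreal _).symm
  have hP : 0 ≤ L * Ldag := by
    simpa only [star_eq_conjTranspose, conjTranspose_eq_transpose_of_trivial, h.2.2.1,
      h.mul_mul_self] using star_mul_self_nonneg (L * Ldag)
  calc H * K = CFC.sqrt (H * K * (H * K)) :=
        (CFC.sqrt_mul_self _ (hHK.mul_nonneg hH.nonneg hK.nonneg)).symm
    _ = CFC.sqrt (L * Ldag * (L * Ldag)) := by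
        rw [hHK.symm.mul_mul_mul_comm, hHL, hKL, h.mul_mul_self]
    _ = L * Ldag := CFC.sqrt_mul_self _ hP

end IsMoorePenrose

section EuclideanAction

variable {d e k : ℕ}

theorem mact_mul (A : Matrix (Fin e) (Fin k) ℝ) (B : Matrix (Fin k) (Fin d) ℝ) (x : Vec d) :
    mact (A * B) x = mact A (mact B x) := by
  simp [mact]

theorem mact_sub (M : Matrix (Fin e) (Fin d) ℝ) (x y : Vec d) :
    mact M (x - y) = mact M x - mact M y :=
  map_sub (Matrix.toEuclideanLin M) x y

theorem mact_smul (M : Matrix (Fin e) (Fin d) ℝ) (c : ℝ) (x : Vec d) :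
    mact M (c • x) = c • mact M x :=
  map_smul (Matrix.toEuclideanLin M) c x

theorem inner_mact_left (M : Matrix (Fin e) (Fin d) ℝ) (x : Vec d) (y : Vec e) :
    ⟪mact M x, y⟫ = ⟪x, mact Mᵀ y⟫ := by
  rw [mact, mact, ← conjTranspose_eq_transpose_of_trivial,
    Matrix.toEuclideanLin_conjTranspose_eq_adjoint, LinearMap.adjoint_inner_right]

theorem mact_sum_smul {α : Type*} (s : Finset α) (c : α → ℝ)
    (A : α → Matrix (Fin e) (Fin d) ℝ) (x : Vec d) :
    mact (∑ a ∈ s, c a • A a) x = ∑ a ∈ s, c a • mact (A a) x := by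
  simp [mact, map_sum, LinearMap.sum_apply]

theorem quad_sum_smul {α : Type*} (s : Finset α) (c : α → ℝ)
    (A : α → Matrix (Fin d) (Fin d) ℝ) (x : Vec d) :
    quad (∑ a ∈ s, c a • A a) x = ∑ a ∈ s, c a * quad (A a) x := by
  simp only [quad, mact_sum_smul, inner_sum, real_inner_smul_right]

theorem quad_sub (A B : Matrix (Fin d) (Fin d) ℝ) (x : Vec d) :
    quad (A - B) x = quad A x - quad B x := by
  simp [quad, mact, inner_sub_right]

theorem quad_transpose_mul_self (H : Matrix (Fin e) (Fin d) ℝ) (x : Vec d) :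
    quad (Hᵀ * H) x = ‖mact H x‖ ^ 2 := by
  rw [quad, mact_mul, ← inner_mact_left, real_inner_self_eq_norm_sq]

theorem quad_transpose_mul_mul (C : Matrix (Fin e) (Fin d) ℝ) (M : Matrix (Fin e) (Fin e) ℝ)
    (x : Vec d) :
    quad (Cᵀ * M * C) x = quad M (mact C x) := by
  rw [quad, quad, mact_mul, mact_mul, ← inner_mact_left]

end EuclideanAction

section Gradient

variable {d : ℕ}

theorem MSmooth.inner_gradient_eq_zero_of_mact_eq_zero {f : Vec d → ℝ}
    {M : Matrix (Fin d) (Fin d) ℝ} (hf : MSmooth f M) (hbdd : BddBelow (Set.range f))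
    {v : Vec d} (hv : mact M v = 0) (x : Vec d) : ⟪gradient f x, v⟫ = 0 := by
  by_contra ha
  obtain ⟨c, hc⟩ := hbdd
  set t := -(f x - c + 1) / ⟪gradient f x, v⟫
  have hquad : quad M (t • v) = 0 := by rw [quad, mact_smul, hv, smul_zero, inner_zero_right]
  have hstep := hf (x + t • v) x
  rw [add_sub_cancel_left, hquad, real_inner_smul_right, div_mul_cancel₀ _ ha] at hstep
  linarith [hc ⟨x + t • v, rfl⟩]

theorem MSmooth.mact_mul_pinv_gradient {f : Vec d → ℝ} {L Ldag : Matrix (Fin d) (Fin d) ℝ}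
    (hf : MSmooth f L) (hbdd : BddBelow (Set.range f)) (hL : Lᵀ = L)
    (h : IsMoorePenrose L Ldag) (x : Vec d) :
    mact (L * Ldag) (gradient f x) = gradient f x := by
  set G := gradient f x
  set v := G - mact (L * Ldag) G
  have hLv : mact L v = 0 := by
    rw [mact_sub, ← mact_mul, h.mul_mul_pinv_of_transpose_eq hL, sub_self]
  have hPv : ⟪mact (L * Ldag) G, v⟫ = 0 := by
    rw [inner_mact_left, h.2.2.1, mact_sub, ← mact_mul, h.mul_mul_self, sub_self,
      inner_zero_right]
  have hv : ⟪v, v⟫ = 0 := by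
    nth_rw 1 [show v = G - mact (L * Ldag) G from rfl]
    rw [inner_sub_left, hf.inner_gradient_eq_zero_of_mact_eq_zero hbdd hLv, hPv, sub_zero]
  exact (sub_eq_zero.mp (inner_self_eq_zero.mp hv)).symm

theorem gradient_const_mul_sum {F ι : Type*} [NormedAddCommGroup F] [InnerProductSpace ℝ F]
    [CompleteSpace F] (s : Finset ι) (f : ι → F → ℝ) (c : ℝ) {x : F}
    (hf : ∀ i ∈ s, DifferentiableAt ℝ (f i) x) :
    gradient (fun y => c * ∑ i ∈ s, f i y) x = c • ∑ i ∈ s, gradient (f i) x := by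
  simp only [gradient, fderiv_const_mul (DifferentiableAt.fun_sum hf), fderiv_fun_sum hf,
    map_smul, map_sum]

end Gradient

namespace Sampling

variable {d : ℕ} (μ : Sampling d)

theorem sum_prob_smul_sketch : ∑ S, μ.prob S • μ.sketch S = 1 := by
  ext j l
  rcases eq_or_ne j l with rfl | hjl
  · have hj : μ.marg j ≠ 0 := (μ.margPos j).ne'
    have hS : ∀ S, μ.prob S * (if j ∈ S then (μ.marg j)⁻¹ else 0)
        = (if j ∈ S then μ.prob S else 0) * (μ.marg j)⁻¹ := fun S => by split_ifs <;> simp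
    simp only [Matrix.sum_apply, Matrix.smul_apply, sketch, diagonal_apply_eq, smul_eq_mul, hS,
      ← Finset.sum_mul, one_apply_eq]
    exact mul_inv_cancel₀ hj
  · simp [Matrix.sum_apply, sketch, hjl]

theorem sum_prob_smul_sketch_mul_mul_sketch (M : Matrix (Fin d) (Fin d) ℝ) :
    ∑ S, μ.prob S • (μ.sketch S * M * μ.sketch S) = μ.Pbar ⊙ M := by
  ext j l
  simp only [Matrix.sum_apply, Matrix.smul_apply, sketch, diagonal_mul, mul_diagonal,
    hadamard_apply, Pbar, probMatrix, of_apply, smul_eq_mul, div_eq_mul_inv, Finset.sum_mul]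
  refine Finset.sum_congr rfl fun S _ => ?_
  by_cases hj : j ∈ S <;> by_cases hl : l ∈ S <;> simp [hj, hl]
  ring

theorem Ptilde_hadamard (M : Matrix (Fin d) (Fin d) ℝ) : μ.Ptilde ⊙ M = μ.Pbar ⊙ M - M := by
  ext j l
  simp [Ptilde, sub_mul]

theorem sum_prob_smul_mact_sketch (A B : Matrix (Fin d) (Fin d) ℝ) (x : Vec d) :
    ∑ S, μ.prob S • mact (A * μ.sketch S * B) x = mact (A * B) x := by
  have hfactor :
      ∑ S, μ.prob S • (A * μ.sketch S * B) = A * (∑ S, μ.prob S • μ.sketch S) * B := by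
    simp [Finset.mul_sum, Finset.sum_mul]
  rw [← mact_sum_smul, hfactor, sum_prob_smul_sketch, mul_one]

theorem quad_Ptilde_hadamard_transpose_mul_self {H K : Matrix (Fin d) (Fin d) ℝ} {x : Vec d}
    (hx : mact (H * K) x = x) :
    quad (μ.Ptilde ⊙ (Hᵀ * H)) (mact K x)
      = ∑ S, μ.prob S * ‖mact (H * μ.sketch S * K) x‖ ^ 2 - ‖x‖ ^ 2 := by
  have hC : ∀ S, (μ.sketch S)ᵀ = μ.sketch S := fun S => diagonal_transpose _
  rw [Ptilde_hadamard, quad_sub, ← sum_prob_smul_sketch_mul_mul_sketch, quad_sum_smul,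
    quad_transpose_mul_self, ← mact_mul, hx]
  congr 1
  refine Finset.sum_congr rfl fun S _ => ?_
  nth_rw 1 [← hC S]
  simp only [quad_transpose_mul_mul, quad_transpose_mul_self, mact_mul]

end Sampling

section ProductWeights

variable {ι Ω E : Type*} [Fintype ι] [DecidableEq ι] [Fintype Ω]
  [AddCommGroup E] [Module ℝ E]

theorem sum_prod_smul_eq_sum_smul_sum_subtype_ne (p : ι → Ω → ℝ) (i : ι)
    (Ψ : Ω → ({j // j ≠ i} → Ω) → E) :
    ∑ ω : ι → Ω, (∏ j, p j (ω j)) • Ψ (ω i) (fun j => ω j)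
      = ∑ T, p i T • ∑ r : {j // j ≠ i} → Ω, (∏ j : {j // j ≠ i}, p j (r j)) • Ψ T r := by
  rw [← (Equiv.funSplitAt i Ω).symm.sum_comp, Fintype.sum_prod_type]
  refine Finset.sum_congr rfl fun T _ => ?_
  rw [Finset.smul_sum]
  refine Finset.sum_congr rfl fun r _ => ?_
  rw [Fintype.prod_eq_mul_prod_subtype_ne _ i, mul_smul]
  simp [Equiv.funSplitAt, Equiv.piSplitAt, fun j : {j // j ≠ i} => j.2]

theorem sum_prod_smul_apply (p : ι → Ω → ℝ) (hp : ∀ i, ∑ T, p i T = 1) (i : ι) (ψ : Ω → E) :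
    ∑ ω : ι → Ω, (∏ j, p j (ω j)) • ψ (ω i) = ∑ T, p i T • ψ T := by
  rw [sum_prod_smul_eq_sum_smul_sum_subtype_ne p i fun T _ => ψ T]
  simp_rw [← Finset.sum_smul, ← Fintype.prod_sum, hp, Finset.prod_const_one, one_smul]

theorem sum_prod_smul_apply_apply (p : ι → Ω → ℝ) (hp : ∀ i, ∑ T, p i T = 1) {i i' : ι}
    (hi : i' ≠ i) (F : Ω → Ω → E) :
    ∑ ω : ι → Ω, (∏ j, p j (ω j)) • F (ω i) (ω i')
      = ∑ T, p i T • ∑ T', p i' T' • F T T' := by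
  rw [sum_prod_smul_eq_sum_smul_sum_subtype_ne p i fun T r => F T (r ⟨i', hi⟩)]
  simp_rw [sum_prod_smul_apply (fun j : {j // j ≠ i} => p j) (fun j => hp j) ⟨i', hi⟩]

theorem sum_prod_smul_smul_sum (p : ι → Ω → ℝ) (hp : ∀ i, ∑ T, p i T = 1) (h : ι → Ω → E)
    {G : ι → E} (hG : ∀ i, ∑ T, p i T • h i T = G i) (c : ℝ) :
    ∑ ω : ι → Ω, (∏ j, p j (ω j)) • (c • ∑ i, h i (ω i)) = c • ∑ i, G i := by
  have hpull : ∀ ω : ι → Ω, (∏ j, p j (ω j)) • (c • ∑ i, h i (ω i))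
      = c • ∑ i, (∏ j, p j (ω j)) • h i (ω i) := fun ω => by rw [smul_comm, Finset.smul_sum]
  rw [Finset.sum_congr rfl fun ω _ => hpull ω, ← Finset.smul_sum, Finset.sum_comm]
  simp_rw [sum_prod_smul_apply p hp, hG]

end ProductWeights

section Variance

variable {E : Type*} [NormedAddCommGroup E] [InnerProductSpace ℝ E]

theorem sum_mul_norm_sq_eq_norm_sum_smul_sq_add {α : Type*} [Fintype α] (q : α → ℝ)
    (hq : ∑ a, q a = 1) (A : α → E) :
    ∑ a, q a * ‖A a‖ ^ 2
      = ‖∑ a, q a • A a‖ ^ 2 + ∑ a, q a * ‖A a - ∑ b, q b • A b‖ ^ 2 := by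
  set m := ∑ b, q b • A b
  have hcross : ∑ a, q a * (2 * ⟪A a, m⟫) = 2 * ‖m‖ ^ 2 := by
    simp_rw [mul_left_comm (q _), ← Finset.mul_sum, ← real_inner_smul_left, ← sum_inner]
    rw [real_inner_self_eq_norm_sq]
  simp_rw [norm_sub_sq_real, mul_add, mul_sub, Finset.sum_add_distrib, Finset.sum_sub_distrib,
    hcross, ← Finset.sum_mul, hq]
  ring

variable {ι Ω : Type*} [Fintype ι] [DecidableEq ι] [Fintype Ω]

theorem sum_prod_mul_norm_sum_sq_of_centered (p : ι → Ω → ℝ) (hp : ∀ i, ∑ T, p i T = 1)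
    (X : ι → Ω → E) (hX : ∀ i, ∑ T, p i T • X i T = 0) :
    ∑ ω : ι → Ω, (∏ j, p j (ω j)) * ‖∑ i, X i (ω i)‖ ^ 2 = ∑ i, ∑ T, p i T * ‖X i T‖ ^ 2 := by
  have hpair : ∀ i i', ∑ ω : ι → Ω, (∏ j, p j (ω j)) * ⟪X i (ω i), X i' (ω i')⟫
      = if i = i' then ∑ T, p i T * ‖X i T‖ ^ 2 else 0 := by
    intro i i'
    split_ifs with hii'
    · subst hii'
      simpa only [smul_eq_mul, real_inner_self_eq_norm_sq] using
        sum_prod_smul_apply p hp i fun T => ⟪X i T, X i T⟫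
    · have h := sum_prod_smul_apply_apply p hp (Ne.symm hii') fun T T' => ⟪X i T, X i' T'⟫
      simp only [smul_eq_mul] at h
      simp_rw [h, ← real_inner_smul_right, ← inner_sum, hX, inner_zero_right, mul_zero,
        Finset.sum_const_zero]
  calc ∑ ω : ι → Ω, (∏ j, p j (ω j)) * ‖∑ i, X i (ω i)‖ ^ 2
      = ∑ ω : ι → Ω, ∑ i, ∑ i', (∏ j, p j (ω j)) * ⟪X i (ω i), X i' (ω i')⟫ := by
        simp_rw [← real_inner_self_eq_norm_sq, sum_inner, inner_sum, Finset.mul_sum]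
    _ = ∑ i, ∑ i', ∑ ω : ι → Ω, (∏ j, p j (ω j)) * ⟪X i (ω i), X i' (ω i')⟫ := by
        rw [Finset.sum_comm]
        exact Finset.sum_congr rfl fun i _ => Finset.sum_comm
    _ = ∑ i, ∑ T, p i T * ‖X i T‖ ^ 2 := by simp [hpair]

theorem sum_prod_mul_norm_smul_sum_sub_sq (p : ι → Ω → ℝ) (hp : ∀ i, ∑ T, p i T = 1)
    (h : ι → Ω → E) {G : ι → E} (hG : ∀ i, ∑ T, p i T • h i T = G i) (c : ℝ) (W : E) :
    ∑ ω : ι → Ω, (∏ j, p j (ω j)) * ‖c • ∑ i, h i (ω i) - W‖ ^ 2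
      = ‖c • ∑ i, G i - W‖ ^ 2 + c ^ 2 * ∑ i, (∑ T, p i T * ‖h i T‖ ^ 2 - ‖G i‖ ^ 2) := by
  have hq : ∑ ω : ι → Ω, ∏ j, p j (ω j) = 1 := by simp [← Fintype.prod_sum, hp]
  have hmean :
      ∑ ω : ι → Ω, (∏ j, p j (ω j)) • (c • ∑ i, h i (ω i) - W) = c • ∑ i, G i - W := by
    simp_rw [smul_sub, Finset.sum_sub_distrib, sum_prod_smul_smul_sum p hp h hG,
      ← Finset.sum_smul, hq, one_smul]
  have hcentered : ∀ ω : ι → Ω, c • ∑ i, h i (ω i) - W - (c • ∑ i, G i - W)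
      = c • ∑ i, (h i (ω i) - G i) := fun ω => by
    rw [sub_sub_sub_cancel_right, ← smul_sub, ← Finset.sum_sub_distrib]
  have hX : ∀ i, ∑ T, p i T • (h i T - G i) = 0 := fun i => by
    simp [smul_sub, Finset.sum_sub_distrib, hG, ← Finset.sum_smul, hp]
  have hvar : ∀ i, ∑ T, p i T * ‖h i T - G i‖ ^ 2 = ∑ T, p i T * ‖h i T‖ ^ 2 - ‖G i‖ ^ 2 :=
    fun i => by
      have := sum_mul_norm_sq_eq_norm_sum_smul_sq_add (p i) (hp i) (h i)
      rw [hG] at this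
      linarith
  rw [sum_mul_norm_sq_eq_norm_sum_smul_sq_add _ hq, hmean]
  simp_rw [hcentered, norm_smul, mul_pow, Real.norm_eq_abs, sq_abs, mul_left_comm _ (c ^ 2),
    ← Finset.mul_sum, sum_prod_mul_norm_sum_sq_of_centered p hp _ hX, hvar]

end Variance

theorem statement9_general {d n : ℕ} (μs : Fin n → Sampling d)
    (fi : Fin n → Vec d → ℝ) (Li Lih Lidag Lidh : Fin n → Matrix (Fin d) (Fin d) ℝ)
    (hfi : ∀ i, Differentiable ℝ (fi i) ∧ ConvexOn ℝ Set.univ (fi i) ∧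
      BddBelow (Set.range (fi i)) ∧ MSmooth (fi i) (Li i))
    (hLih : ∀ i, (Lih i).PosSemidef ∧ Lih i * Lih i = Li i)
    (hLidag : ∀ i, IsMoorePenrose (Li i) (Lidag i))
    (hLidh : ∀ i, (Lidh i).PosSemidef ∧ Lidh i * Lidh i = Lidag i)
    (f : Vec d → ℝ) (hf : f = fun x => (1 / (n : ℝ)) * ∑ i, fi i x)
    (g : Vec d → (Fin n → Finset (Fin d)) → Vec d)
    (hg : g = fun x ω => (1 / (n : ℝ)) •
      ∑ i, mact (Lih i * (μs i).sketch (ω i) * Lidh i) (gradient (fi i) x)) :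
    (∀ x : Vec d,
      (∑ ω : Fin n → Finset (Fin d), (∏ i, (μs i).prob (ω i)) • g x ω) = gradient f x) ∧
    ∀ x y : Vec d,
      (∑ ω : Fin n → Finset (Fin d),
          (∏ i, (μs i).prob (ω i)) * ‖g x ω - gradient f y‖ ^ 2)
        = ‖gradient f x - gradient f y‖ ^ 2
          + (1 / (n : ℝ) ^ 2) * ∑ i,
              quad (Matrix.hadamard (μs i).Ptilde (Li i)) (mact (Lidh i) (gradient (fi i) x)) := by
  subst hf hg
  have hL : ∀ i, Li i = (Lih i)ᵀ * Lih i := fun i => by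
    rw [← conjTranspose_eq_transpose_of_trivial, (hLih i).1.1, (hLih i).2]
  have hfix : ∀ i x, mact (Lih i * Lidh i) (gradient (fi i) x) = gradient (fi i) x := by
    intro i x
    rw [(hLidag i).mul_eq_mul_of_mul_self_eq (hLih i).1 (hLih i).2 (hLidh i).1 (hLidh i).2]
    refine (hfi i).2.2.2.mact_mul_pinv_gradient (hfi i).2.2.1 ?_ (hLidag i) x
    rw [hL i, transpose_mul, transpose_transpose]
  have hmean : ∀ x i, ∑ S, (μs i).prob S • mact (Lih i * (μs i).sketch S * Lidh i)
      (gradient (fi i) x) = gradient (fi i) x := fun x i => by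
    rw [Sampling.sum_prob_smul_mact_sketch, hfix]
  have hgrad : ∀ x, gradient (fun y => 1 / (n : ℝ) * ∑ i, fi i y) x
      = (1 / (n : ℝ)) • ∑ i, gradient (fi i) x := fun x =>
    gradient_const_mul_sum _ _ _ fun i _ => (hfi i).1 x
  have hp : ∀ i, ∑ S, (μs i).prob S = 1 := fun i => (μs i).total
  refine ⟨fun x => ?_, fun x y => ?_⟩
  · rw [hgrad]
    exact sum_prod_smul_smul_sum _ hp _ (hmean x) _
  · rw [hgrad x, sum_prod_mul_norm_smul_sum_sub_sq _ hp _ (hmean x), _root_.one_div_pow]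
    simp_rw [hL, Sampling.quad_Ptilde_hadamard_transpose_mul_self _ (hfix _ x)]

/-- unbiasedness and exact second-moment decomposition of the sparsified
gradient estimator `g(x) = (1/n) Σ_i L_i^{1/2} C_i L_i^{†1/2} ∇f_i(x)` with mutually
independent sketches. -/
theorem statement9 {d n : ℕ} (hn : 0 < n) (μs : Fin n → Sampling d)
    (fi : Fin n → Vec d → ℝ) (Li Lih Lidag Lidh : Fin n → Matrix (Fin d) (Fin d) ℝ)
    (hLi : ∀ i, (Li i).PosSemidef)
    (hfi : ∀ i, Differentiable ℝ (fi i) ∧ ConvexOn ℝ Set.univ (fi i) ∧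
      BddBelow (Set.range (fi i)) ∧ MSmooth (fi i) (Li i))
    (hLih : ∀ i, (Lih i).PosSemidef ∧ Lih i * Lih i = Li i)
    (hLidag : ∀ i, IsMoorePenrose (Li i) (Lidag i))
    (hLidh : ∀ i, (Lidh i).PosSemidef ∧ Lidh i * Lidh i = Lidag i)
    (f : Vec d → ℝ) (hf : f = fun x => (1 / (n : ℝ)) * ∑ i, fi i x)
    (g : Vec d → (Fin n → Finset (Fin d)) → Vec d)
    (hg : g = fun x ω => (1 / (n : ℝ)) •
      ∑ i, mact (Lih i * (μs i).sketch (ω i) * Lidh i) (gradient (fi i) x)) :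
    (∀ x : Vec d,
      (∑ ω : Fin n → Finset (Fin d), (∏ i, (μs i).prob (ω i)) • g x ω) = gradient f x) ∧
    ∀ x y : Vec d,
      (∑ ω : Fin n → Finset (Fin d),
          (∏ i, (μs i).prob (ω i)) * ‖g x ω - gradient f y‖ ^ 2)
        = ‖gradient f x - gradient f y‖ ^ 2
          + (1 / (n : ℝ) ^ 2) * ∑ i,
              quad (Matrix.hadamard (μs i).Ptilde (Li i)) (mact (Lidh i) (gradient (fi i) x)) :=
  statement9_general μs fi Li Lih Lidag Lidh hfi hLih hLidag hLidh f hf g hg
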